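/- Let f : ℝ² → ℝ be a non-degenerate weighted homogeneous polynomial of type (d; w₁, w₂) with w₁ ≥ w₂. Then for every λ < (d − w₁)/w₂ there do NOT exist C > 0 and a neighborhood U of 0 with ‖∇f(x)‖ ≥ C‖x‖^λ for all x ∈ U; consequently the Łojasiewicz exponent satisfies L(f) ≥ (d − w₁)/w₂. -/

import Mathlib

open MvPolynomial

/-- Euclidean norm of the gradient of a polynomial `f` at `x`. -/
noncomputable def gradNorm {n : ℕ} (f : MvPolynomial (Fin n) ℝ) (x : Fin n → ℝ) : ℝ :=
  Real.sqrt (∑ i, (eval x (pderiv i f)) ^ 2)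

/-- Euclidean norm on `Fin n → ℝ`. -/
noncomputable def eNorm {n : ℕ} (x : Fin n → ℝ) : ℝ :=
  Real.sqrt (∑ i, (x i) ^ 2)

/-- `f` is weighted homogeneous of type `(d; w)`: every monomial `x^α` appearing in `f`
satisfies `∑ i, α i * w i = d`. -/
def IsWeightedHomog {n : ℕ} (f : MvPolynomial (Fin n) ℝ) (w : Fin n → ℕ) (d : ℕ) : Prop :=
  ∀ α ∈ f.support, ∑ i, α i * w i = d

/-- `f` is non-degenerate (isolated singularity at the origin): in some neighborhood of `0`
the gradient of `f` vanishes only at the origin. -/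
def Nondeg {n : ℕ} (f : MvPolynomial (Fin n) ℝ) : Prop :=
  ∃ U ∈ nhds (0 : Fin n → ℝ), ∀ x ∈ U, (∀ i, eval x (pderiv i f) = 0) → x = 0

/-- The Łojasiewicz inequality `‖∇f(x)‖ ≥ C ‖x‖^lam` holds near `0` for some `C > 0`. -/
def LojIneq {n : ℕ} (f : MvPolynomial (Fin n) ℝ) (lam : ℝ) : Prop :=
  ∃ C > (0 : ℝ), ∃ U ∈ nhds (0 : Fin n → ℝ), ∀ x ∈ U, C * eNorm x ^ lam ≤ gradNorm f x

/-- The Łojasiewicz exponent of `f`: the infimum of all `lam > 0` for which the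
Łojasiewicz inequality holds near the origin. -/
noncomputable def lojExp {n : ℕ} (f : MvPolynomial (Fin n) ℝ) : ℝ :=
  sInf {lam : ℝ | 0 < lam ∧ LojIneq f lam}

/-- The weighted "radius" `ρ(x) = (∑ i |x i| ^ (2 / w i)) ^ (1/2)`. -/
noncomputable def rho {n : ℕ} (w : Fin n → ℕ) (x : Fin n → ℝ) : ℝ :=
  Real.sqrt (∑ i, |x i| ^ ((2 : ℝ) / (w i : ℝ)))

/-- The weighted norm of the gradient:
`‖grad_w f(x)‖_w = (∑ i ρ(x)^(2 wᵢ) |∂f/∂xᵢ(x)|²)^(1/2)`. -/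
noncomputable def wGradNorm {n : ℕ} (w : Fin n → ℕ) (f : MvPolynomial (Fin n) ℝ)
    (x : Fin n → ℝ) : ℝ :=
  Real.sqrt (∑ i, rho w x ^ (2 * w i) * (eval x (pderiv i f)) ^ 2)


/-! The weighted scaling `x ↦ t^w • x = (t^w₁ x₁, t^w₂ x₂)` multiplies `∂ᵢf` by `t^(d - wᵢ)`.
On the `x₂`-axis, `x = s^w • e₂` has `‖x‖ = s^w₂` while `‖∇f(x)‖ = O(s^(d - w₁))`, which rules
out every exponent below `(d - w₁)/w₂`. Conversely every `x ≠ 0` near `0` is `ρ(x)^w • u` with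
`u` on the compact weighted sphere `ρ = 1`, where `‖∇f‖` has a positive minimum because the
critical set of `f` is invariant under the scaling. Hence some Łojasiewicz inequality holds, so
the infimum defining `lojExp f` is over a nonempty set and is not the junk value `sInf ∅ = 0`.
-/

lemma Real.sqrt_sum_sq_le_mul {ι : Type*} (s : Finset ι) {a b : ι → ℝ} {c : ℝ} (hc : 0 ≤ c)
    (h : ∀ i, |a i| ≤ c * |b i|) :
    √(∑ i ∈ s, a i ^ 2) ≤ c * √(∑ i ∈ s, b i ^ 2) := by
  rw [← Real.sqrt_sq hc, ← Real.sqrt_mul (sq_nonneg c), Finset.mul_sum]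
  gcongr with i
  rw [← sq_abs (a i), ← sq_abs (b i), ← mul_pow]
  exact pow_le_pow_left₀ (abs_nonneg _) (h i) 2

section WeightedScale

variable {n : ℕ} {w : Fin n → ℕ}

def weightedScale (w : Fin n → ℕ) (t : ℝ) (x : Fin n → ℝ) : Fin n → ℝ :=
  fun i => t ^ w i * x i

lemma weightedScale_mul (s t : ℝ) (x : Fin n → ℝ) :
    weightedScale w s (weightedScale w t x) = weightedScale w (s * t) x := by
  funext i
  simp only [weightedScale, mul_pow, mul_assoc]

lemma weightedScale_one (x : Fin n → ℝ) : weightedScale w 1 x = x := by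
  funext i
  simp [weightedScale]

lemma weightedScale_zero (t : ℝ) : weightedScale w t 0 = 0 := by
  funext i
  simp [weightedScale]

lemma weightedScale_single (t : ℝ) (j : Fin n) :
    weightedScale w t (Pi.single j 1) = Pi.single j (t ^ w j) := by
  funext i
  rcases eq_or_ne i j with rfl | hij
  · simp [weightedScale]
  · simp [weightedScale, hij]

lemma tendsto_weightedScale_zero (hw : ∀ i, 0 < w i) (x : Fin n → ℝ) :
    Filter.Tendsto (fun t => weightedScale w t x) (nhds 0) (nhds 0) := by
  have hcont : Continuous fun t => weightedScale w t x := by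
    unfold weightedScale; fun_prop
  have h0 : weightedScale w 0 x = 0 := by
    funext i
    simp [weightedScale, zero_pow (hw i).ne']
  simpa [h0] using hcont.tendsto 0

lemma eval_weightedScale_mul_pow {g : MvPolynomial (Fin n) ℝ} {k e : ℕ}
    (h : ∀ α ∈ g.support, ∑ i, α i * w i + k = e) (t : ℝ) (x : Fin n → ℝ) :
    eval (weightedScale w t x) g * t ^ k = t ^ e * eval x g := by
  rw [eval_eq', eval_eq', Finset.sum_mul, Finset.mul_sum]
  refine Finset.sum_congr rfl fun α hα => ?_
  have hprod : ∏ i, (t ^ w i * x i) ^ α i = t ^ (∑ i, α i * w i) * ∏ i, x i ^ α i := by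
    rw [← Finset.prod_pow_eq_pow_sum, ← Finset.prod_mul_distrib]
    exact Finset.prod_congr rfl fun i _ => by rw [mul_pow, ← pow_mul, Nat.mul_comm]
  simp only [weightedScale]
  rw [hprod, ← h α hα, pow_add]
  ring

end WeightedScale

section WeightedHomog

variable {n : ℕ} {w : Fin n → ℕ} {f : MvPolynomial (Fin n) ℝ} {d : ℕ}

lemma IsWeightedHomog.sum_add_eq_of_mem_support_pderiv
    (hf : IsWeightedHomog f w d) (i : Fin n) :
    ∀ β ∈ (pderiv i f).support, ∑ j, β j * w j + w i = d := by
  intro β hβ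
  have hmem : β + Finsupp.single i 1 ∈ f.support := by
    rw [mem_support_iff, coeff_pderiv] at hβ
    exact mem_support_iff.2 (left_ne_zero_of_mul hβ)
  rw [← hf _ hmem]
  simp [add_mul, Finset.sum_add_distrib, Finsupp.single_apply]

lemma IsWeightedHomog.abs_eval_weightedScale_pderiv (hf : IsWeightedHomog f w d) (i : Fin n)
    {t : ℝ} (ht : 0 < t) (x : Fin n → ℝ) :
    |eval (weightedScale w t x) (pderiv i f)| = t ^ ((d : ℝ) - w i) * |eval x (pderiv i f)| := by
  have hscale := eval_weightedScale_mul_pow (hf.sum_add_eq_of_mem_support_pderiv i) t x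
  rw [← eq_div_iff (pow_pos ht _).ne'] at hscale
  rw [hscale, Real.rpow_sub ht, Real.rpow_natCast, Real.rpow_natCast, abs_div, abs_mul,
    abs_of_pos (pow_pos ht _), abs_of_pos (pow_pos ht _)]
  ring

lemma IsWeightedHomog.gradNorm_weightedScale_le (hf : IsWeightedHomog f w d) {m : ℕ}
    (hm : ∀ i, w i ≤ m) {t : ℝ} (ht0 : 0 < t) (ht1 : t ≤ 1) (x : Fin n → ℝ) :
    gradNorm f (weightedScale w t x) ≤ t ^ ((d : ℝ) - m) * gradNorm f x := by
  refine Real.sqrt_sum_sq_le_mul _ (by positivity) fun i => ?_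
  rw [hf.abs_eval_weightedScale_pderiv i ht0]
  exact mul_le_mul_of_nonneg_right
    (Real.rpow_le_rpow_of_exponent_ge ht0 ht1 (by gcongr; exact_mod_cast hm i)) (abs_nonneg _)

lemma IsWeightedHomog.le_gradNorm_weightedScale (hf : IsWeightedHomog f w d) {m : ℕ}
    (hm : ∀ i, m ≤ w i) {t : ℝ} (ht0 : 0 < t) (ht1 : t ≤ 1) (x : Fin n → ℝ) :
    t ^ ((d : ℝ) - m) * gradNorm f x ≤ gradNorm f (weightedScale w t x) := by
  have hinv := Real.sqrt_sum_sq_le_mul (a := fun i => eval x (pderiv i f))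
    (b := fun i => eval (weightedScale w t x) (pderiv i f)) Finset.univ
    (c := (t ^ ((d : ℝ) - m))⁻¹) (by positivity) fun i => by
      rw [hf.abs_eval_weightedScale_pderiv i ht0, ← mul_assoc]
      refine le_mul_of_one_le_left (abs_nonneg _) ?_
      rw [inv_mul_eq_div, one_le_div (by positivity)]
      exact Real.rpow_le_rpow_of_exponent_ge ht0 ht1 (by gcongr; exact_mod_cast hm i)
  rwa [← le_div_iff₀' (by positivity), div_eq_inv_mul]

lemma gradNorm_eq_zero_iff {x : Fin n → ℝ} :
    gradNorm f x = 0 ↔ ∀ i, eval x (pderiv i f) = 0 := by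
  rw [gradNorm, Real.sqrt_eq_zero (by positivity),
    Finset.sum_eq_zero_iff_of_nonneg fun i _ => sq_nonneg _]
  simp

lemma IsWeightedHomog.gradNorm_pos (hf : IsWeightedHomog f w d) (hnd : Nondeg f)
    (hw : ∀ i, 0 < w i) {x : Fin n → ℝ} (hx : x ≠ 0) : 0 < gradNorm f x := by
  refine (Real.sqrt_nonneg _).lt_of_ne' fun hzero => hx ?_
  obtain ⟨U, hU, hUcrit⟩ := hnd
  have hnear : ∀ᶠ t in nhdsWithin (0 : ℝ) (Set.Ioi 0), weightedScale w t x ∈ U :=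
    (tendsto_weightedScale_zero hw x).mono_left nhdsWithin_le_nhds hU
  obtain ⟨t, htU, ht⟩ := (hnear.and self_mem_nhdsWithin).exists
  have hcrit := hUcrit _ htU fun i => by
    rw [← abs_eq_zero, hf.abs_eval_weightedScale_pderiv i ht, abs_eq_zero.2
      (gradNorm_eq_zero_iff.1 hzero i), mul_zero]
  simpa [weightedScale_mul, inv_mul_cancel₀ ht.ne', weightedScale_one, weightedScale_zero] using
    congrArg (weightedScale w t⁻¹) hcrit

end WeightedHomog

section Rho

variable {n : ℕ} {w : Fin n → ℕ}

lemma continuous_rho (w : Fin n → ℕ) : Continuous (rho w) :=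
  Real.continuous_sqrt.comp <| continuous_finsetSum _ fun i _ =>
    (continuous_apply i).abs.rpow_const fun _ => Or.inr (by positivity)

lemma rho_eq_zero_iff (hw : ∀ i, 0 < w i) {x : Fin n → ℝ} : rho w x = 0 ↔ x = 0 := by
  rw [rho, Real.sqrt_eq_zero (by positivity),
    Finset.sum_eq_zero_iff_of_nonneg fun i _ => by positivity, funext_iff]
  refine forall_congr' fun i => ?_
  rw [Real.rpow_eq_zero (abs_nonneg _) (div_pos two_pos (Nat.cast_pos.2 (hw i))).ne',
    abs_eq_zero]
  simp

lemma rho_pos (hw : ∀ i, 0 < w i) {x : Fin n → ℝ} (hx : x ≠ 0) : 0 < rho w x :=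
  (Real.sqrt_nonneg _).lt_of_ne' ((rho_eq_zero_iff hw).not.2 hx)

lemma rho_weightedScale (hw : ∀ i, 0 < w i) {t : ℝ} (ht : 0 ≤ t) (x : Fin n → ℝ) :
    rho w (weightedScale w t x) = t * rho w x := by
  have hterm : ∀ i, |t ^ w i * x i| ^ ((2 : ℝ) / w i) = t ^ 2 * |x i| ^ ((2 : ℝ) / w i) := by
    intro i
    have hwi : (w i : ℝ) ≠ 0 := by exact_mod_cast (hw i).ne'
    rw [abs_mul, abs_of_nonneg (pow_nonneg ht _), Real.mul_rpow (by positivity) (abs_nonneg _),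
      ← Real.rpow_natCast, ← Real.rpow_mul ht, mul_div_cancel₀ _ hwi]
    norm_cast
  simp only [rho, weightedScale, hterm, ← Finset.mul_sum]
  rw [Real.sqrt_mul (sq_nonneg t), Real.sqrt_sq ht]

lemma exists_rho_eq_one_weightedScale_eq (hw : ∀ i, 0 < w i) {x : Fin n → ℝ} (hx : x ≠ 0) :
    ∃ u, rho w u = 1 ∧ weightedScale w (rho w x) u = x := by
  have hpos := rho_pos hw hx
  refine ⟨weightedScale w (rho w x)⁻¹ x, ?_, ?_⟩
  · rw [rho_weightedScale hw (inv_nonneg.2 hpos.le), inv_mul_cancel₀ hpos.ne']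
  · rw [weightedScale_mul, mul_inv_cancel₀ hpos.ne', weightedScale_one]

lemma abs_le_one_of_rho_eq_one (hw : ∀ i, 0 < w i) {u : Fin n → ℝ} (hu : rho w u = 1)
    (j : Fin n) : |u j| ≤ 1 := by
  rw [rho, Real.sqrt_eq_one] at hu
  by_contra! h
  have hj : 1 < |u j| ^ ((2 : ℝ) / w j) :=
    Real.one_lt_rpow h (div_pos two_pos (Nat.cast_pos.2 (hw j)))
  have hle := Finset.single_le_sum (f := fun i => |u i| ^ ((2 : ℝ) / w i))
    (fun i _ => by positivity) (Finset.mem_univ j)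
  linarith

lemma isCompact_rho_eq_one (hw : ∀ i, 0 < w i) : IsCompact {u : Fin n → ℝ | rho w u = 1} := by
  refine Metric.isCompact_of_isClosed_isBounded (isClosed_eq (continuous_rho w) continuous_const)
    ((Metric.isBounded_closedBall (x := 0) (r := 1)).subset fun u hu => ?_)
  rw [Metric.mem_closedBall, dist_pi_le_iff zero_le_one]
  intro j
  simpa using abs_le_one_of_rho_eq_one hw hu j

end Rho

section ENorm

variable {n : ℕ}

lemma continuous_eNorm : Continuous (eNorm (n := n)) := by
  unfold eNorm
  fun_prop

lemma eNorm_single (j : Fin n) (a : ℝ) : eNorm (Pi.single j a) = |a| := by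
  simp [eNorm, Pi.single_apply, ite_pow, Real.sqrt_sq_eq_abs]

lemma eNorm_weightedScale_le {w : Fin n → ℕ} {m : ℕ} (hm : ∀ i, m ≤ w i) {t : ℝ} (ht0 : 0 ≤ t)
    (ht1 : t ≤ 1) (x : Fin n → ℝ) : eNorm (weightedScale w t x) ≤ t ^ m * eNorm x :=
  Real.sqrt_sum_sq_le_mul _ (by positivity) fun i => by
    rw [weightedScale, abs_mul, abs_of_nonneg (pow_nonneg ht0 _)]
    exact mul_le_mul_of_nonneg_right (pow_le_pow_of_le_one ht0 ht1 (hm i)) (abs_nonneg _)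

end ENorm

section Lojasiewicz

variable {n : ℕ} {w : Fin n → ℕ} {f : MvPolynomial (Fin n) ℝ} {d : ℕ}

lemma continuous_gradNorm (f : MvPolynomial (Fin n) ℝ) : Continuous (gradNorm f) :=
  Real.continuous_sqrt.comp <| continuous_finsetSum _ fun _ _ => (continuous_eval _).pow 2

theorem IsWeightedHomog.not_lojIneq (hf : IsWeightedHomog f w d) (hw : ∀ i, 0 < w i) {m : ℕ}
    (hm : ∀ i, w i ≤ m) (j : Fin n) {lam : ℝ} (hlam : lam < ((d : ℝ) - m) / w j) :
    ¬ LojIneq f lam := by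
  rintro ⟨C, hC, U, hU, hloj⟩
  set v : Fin n → ℝ := Pi.single j 1
  set D : ℝ := (d : ℝ) - m
  set q : ℝ := (w j : ℝ) * lam - D
  have hq : q < 0 := by
    have := (lt_div_iff₀' (Nat.cast_pos.2 (hw j))).1 hlam
    linarith
  have hnear : ∀ᶠ s in nhdsWithin (0 : ℝ) (Set.Ioi 0), weightedScale w s v ∈ U :=
    (tendsto_weightedScale_zero hw v).mono_left nhdsWithin_le_nhds hU
  have hlarge : ∀ᶠ s in nhdsWithin (0 : ℝ) (Set.Ioi 0), gradNorm f v < C * s ^ q :=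
    ((tendsto_rpow_neg_nhdsGT_zero hq).const_mul_atTop hC).eventually_gt_atTop _
  have hsmall : ∀ᶠ s in nhdsWithin (0 : ℝ) (Set.Ioi 0), s < 1 :=
    nhdsWithin_le_nhds (eventually_lt_nhds zero_lt_one)
  obtain ⟨s, hsU, hsv, hs1, hs0 : 0 < s⟩ :=
    (hnear.and (hlarge.and (hsmall.and self_mem_nhdsWithin))).exists
  have hnorm : eNorm (weightedScale w s v) ^ lam = s ^ q * s ^ D := by
    rw [weightedScale_single, eNorm_single, abs_of_pos (pow_pos hs0 _), ← Real.rpow_natCast,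
      ← Real.rpow_mul hs0.le, ← Real.rpow_add hs0, sub_add_cancel]
  have hlower := hloj _ hsU
  have hupper := hf.gradNorm_weightedScale_le hm hs0 hs1.le v
  have hD : 0 < s ^ D := Real.rpow_pos_of_pos hs0 _
  rw [hnorm] at hlower
  linarith [mul_lt_mul_of_pos_left hsv hD]

lemma IsWeightedHomog.exists_pos_le_gradNorm_of_rho_eq_one (hf : IsWeightedHomog f w d)
    (hnd : Nondeg f) (hw : ∀ i, 0 < w i) : ∃ c > 0, ∀ u, rho w u = 1 → c ≤ gradNorm f u := by
  obtain hK | hK := {u : Fin n → ℝ | rho w u = 1}.eq_empty_or_nonempty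
  · exact ⟨1, one_pos, fun u hu => (Set.eq_empty_iff_forall_notMem.1 hK u hu).elim⟩
  obtain ⟨z, hz, hmin⟩ :=
    (isCompact_rho_eq_one hw).exists_isMinOn hK (continuous_gradNorm f).continuousOn
  refine ⟨gradNorm f z, hf.gradNorm_pos hnd hw ?_, fun u hu => hmin hu⟩
  rintro rfl
  simp [(rho_eq_zero_iff hw).2 rfl] at hz

theorem IsWeightedHomog.exists_lojIneq (hf : IsWeightedHomog f w d) (hnd : Nondeg f)
    (hw : ∀ i, 0 < w i) {m : ℕ} (hm0 : 0 < m) (hm : ∀ i, m ≤ w i) :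
    ∃ lam > 0, LojIneq f lam := by
  obtain ⟨c, hc, hcK⟩ := hf.exists_pos_le_gradNorm_of_rho_eq_one hnd hw
  obtain ⟨M, hMK⟩ :=
    (isCompact_rho_eq_one hw).exists_bound_of_continuousOn continuous_eNorm.continuousOn
  set M' := max M 1
  have hM' : 0 < M' := lt_of_lt_of_le one_pos (le_max_right _ _)
  set lam := max (((d : ℝ) - m) / m) 1
  have hlam0 : 0 < lam := lt_of_lt_of_le one_pos (le_max_right _ _)
  have hlam : (d : ℝ) - m ≤ m * lam :=
    (div_le_iff₀' (Nat.cast_pos.2 hm0)).1 (le_max_left _ _)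
  refine ⟨lam, hlam0, c / M' ^ lam, by positivity, {x | rho w x < 1}, ?_, fun x hx => ?_⟩
  · exact (isOpen_lt (continuous_rho w) continuous_const).mem_nhds
      (by simp [(rho_eq_zero_iff hw).2 rfl])
  obtain rfl | hx0 := eq_or_ne x 0
  · simp [eNorm, Real.zero_rpow hlam0.ne', gradNorm]
  obtain ⟨u, hu, hxu⟩ := exists_rho_eq_one_weightedScale_eq hw hx0
  set t := rho w x
  have ht0 : 0 < t := rho_pos hw hx0
  have ht1 : t ≤ 1 := le_of_lt hx
  have hxM : eNorm x ≤ t ^ m * M' := by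
    rw [← hxu]
    refine (eNorm_weightedScale_le hm ht0.le ht1 u).trans
      (mul_le_mul_of_nonneg_left ?_ (by positivity))
    exact (le_abs_self _).trans ((hMK u hu).trans (le_max_left _ _))
  calc c / M' ^ lam * eNorm x ^ lam
      ≤ c / M' ^ lam * (t ^ m * M') ^ lam := by gcongr; exact Real.sqrt_nonneg _
    _ = c * t ^ ((m : ℝ) * lam) := by
        rw [Real.mul_rpow (by positivity) hM'.le, ← Real.rpow_natCast, ← Real.rpow_mul ht0.le]
        field_simp
    _ ≤ c * t ^ ((d : ℝ) - m) :=
        mul_le_mul_of_nonneg_left (Real.rpow_le_rpow_of_exponent_ge ht0 ht1 hlam) hc.le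
    _ ≤ t ^ ((d : ℝ) - m) * gradNorm f u := by rw [mul_comm]; gcongr; exact hcK u hu
    _ ≤ gradNorm f x := hxu ▸ hf.le_gradNorm_weightedScale hm ht0 ht1 u

lemma le_lojExp {a : ℝ} (hne : ∃ lam > 0, LojIneq f lam)
    (h : ∀ lam < a, ¬ LojIneq f lam) : a ≤ lojExp f := by
  obtain ⟨lam, hlam0, hlam⟩ := hne
  exact le_csInf ⟨lam, hlam0, hlam⟩ fun b ⟨_, hb⟩ => not_lt.1 fun hba => h b hba hb

end Lojasiewicz

theorem stmt6_general (d w₁ w₂ : ℕ) (hw₂ : 0 < w₂) (hw : w₂ ≤ w₁)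
    (f : MvPolynomial (Fin 2) ℝ)
    (hhom : IsWeightedHomog f ![w₁, w₂] d)
    (hnd : Nondeg f) :
    (∀ lam : ℝ, lam < ((d : ℝ) - w₁) / w₂ → ¬ LojIneq f lam) ∧
    ((d : ℝ) - w₁) / w₂ ≤ lojExp f := by
  have hpos : ∀ i, 0 < ![w₁, w₂] i := Fin.forall_fin_two.2 ⟨hw₂.trans_le hw, hw₂⟩
  have hle_max : ∀ i, ![w₁, w₂] i ≤ w₁ := Fin.forall_fin_two.2 ⟨le_rfl, hw⟩
  have hmin_le : ∀ i, w₂ ≤ ![w₁, w₂] i := Fin.forall_fin_two.2 ⟨hw, le_rfl⟩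
  have hno : ∀ lam : ℝ, lam < ((d : ℝ) - w₁) / w₂ → ¬ LojIneq f lam :=
    fun _ hlam => hhom.not_lojIneq hpos hle_max 1 hlam
  exact ⟨hno, le_lojExp (hhom.exists_lojIneq hnd hpos hw₂ hmin_le) hno⟩

theorem stmt6 (d w₁ w₂ : ℕ) (hd : 0 < d) (hw₂ : 0 < w₂) (hw : w₂ ≤ w₁)
    (f : MvPolynomial (Fin 2) ℝ)
    (hhom : IsWeightedHomog f ![w₁, w₂] d)
    (hnd : Nondeg f) :
    (∀ lam : ℝ, lam < ((d : ℝ) - w₁) / w₂ → ¬ LojIneq f lam) ∧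
    ((d : ℝ) - w₁) / w₂ ≤ lojExp f :=
  stmt6_general d w₁ w₂ hw₂ hw f hhom hnd
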